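/- Let N ≥ 3 and let L be a Lie subalgebra of so(N,ℝ) (real antisymmetric N×N matrices with the commutator bracket) such that every matrix C ∈ L satisfies C_{ij} = 0 for all indices i ≥ 2 and j ≥ 2 (i.e. C has nonzero entries only in its first row and first column). Then L has dimension at most 1. -/

import Mathlib

open Matrix

attribute [local instance 100] LieRing.ofAssociativeRing

/-!
A skew matrix `C` supported on the row and column of an index `o` is determined by its row
`c = C o`, with `c o = 0`. For two such matrices with rows `a` and `b`, the entry of `⁅A, B⁆` at
`(i, j)` with `i, j ≠ o` is `a i * b j - b i * a j`. Closure of `L` under the bracket forces these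
`2 × 2` minors to vanish, so all rows of elements of `L` are proportional and `L` is spanned by a
single element.
-/

namespace Matrix

variable {ι R : Type*}

lemma diag_eq_zero_of_transpose_eq_neg [CommRing R] [NoZeroDivisors R] [NeZero (2 : R)]
    {C : Matrix ι ι R} (hC : Cᵀ = -C) (i : ι) : C i i = 0 := by
  have hii : C i i = -C i i := congr_fun (congr_fun hC i) i
  have htwo : (2 : R) * C i i = 0 := by linear_combination hii
  exact (mul_eq_zero.mp htwo).resolve_left two_ne_zero

lemma mul_apply_eq_of_row_supported [Fintype ι] [NonUnitalNonAssocSemiring R] {o i : ι}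
    {A : Matrix ι ι R} (hA : ∀ k, k ≠ o → A i k = 0) (B : Matrix ι ι R) (j : ι) :
    (A * B) i j = A i o * B o j := by
  rw [mul_apply]
  exact Finset.sum_eq_single_of_mem o (Finset.mem_univ o) fun k _ hk => by rw [hA k hk, zero_mul]

lemma eq_smul_of_row_eq_smul [CommRing R] {o : ι} {C D : Matrix ι ι R}
    (hC : Cᵀ = -C) (hD : Dᵀ = -D)
    (hCo : ∀ i j, i ≠ o → j ≠ o → C i j = 0) (hDo : ∀ i j, i ≠ o → j ≠ o → D i j = 0)
    (c : R) (hrow : ∀ j, C o j = c * D o j) : C = c • D := by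
  ext i j
  rw [smul_apply, smul_eq_mul]
  by_cases hi : i = o
  · exact hi ▸ hrow j
  by_cases hj : j = o
  · subst hj
    have hCi : C i j = -C j i := congr_fun (congr_fun hC j) i
    have hDi : D i j = -D j i := congr_fun (congr_fun hD j) i
    rw [hCi, hDi, hrow i]
    ring
  · rw [hCo i j hi hj, hDo i j hi hj, mul_zero]

end Matrix

namespace LieSubalgebra

variable {ι K : Type*} [Fintype ι] [DecidableEq ι]

lemma row_mul_row_comm [CommRing K] (L : LieSubalgebra K (Matrix ι ι K)) {o : ι}
    (hskew : ∀ C ∈ L, Cᵀ = -C) (hsupp : ∀ C ∈ L, ∀ i j, i ≠ o → j ≠ o → C i j = 0)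
    {A B : Matrix ι ι K} (hA : A ∈ L) (hB : B ∈ L) {i j : ι} (hi : i ≠ o) (hj : j ≠ o) :
    A o i * B o j = B o i * A o j := by
  have hbracket : ⁅A, B⁆ i j = 0 := hsupp _ (L.lie_mem hA hB) i j hi hj
  rw [Ring.lie_def, Matrix.sub_apply,
    mul_apply_eq_of_row_supported (fun k hk => hsupp A hA i k hi hk),
    mul_apply_eq_of_row_supported (fun k hk => hsupp B hB i k hi hk)] at hbracket
  have hAi : A i o = -A o i := congr_fun (congr_fun (hskew A hA) o) i
  have hBi : B i o = -B o i := congr_fun (congr_fun (hskew B hB) o) i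
  rw [hAi, hBi] at hbracket
  linear_combination -hbracket

theorem finrank_le_one_of_skew_of_supported [Field K] [NeZero (2 : K)]
    (L : LieSubalgebra K (Matrix ι ι K)) (o : ι)
    (hskew : ∀ C ∈ L, Cᵀ = -C) (hsupp : ∀ C ∈ L, ∀ i j, i ≠ o → j ≠ o → C i j = 0) :
    Module.finrank K L ≤ 1 := by
  by_cases hex : ∃ A ∈ L, ∃ i, i ≠ o ∧ A o i ≠ 0
  · obtain ⟨A, hA, i, hi, hAi⟩ := hex
    refine finrank_le_one ⟨A, hA⟩ fun ⟨B, hB⟩ => ⟨B o i / A o i, Subtype.ext ?_⟩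
    refine (eq_smul_of_row_eq_smul (hskew B hB) (hskew A hA) (hsupp B hB) (hsupp A hA) _
      fun j => ?_).symm
    by_cases hj : j = o
    · subst hj
      rw [diag_eq_zero_of_transpose_eq_neg (hskew B hB), diag_eq_zero_of_transpose_eq_neg
        (hskew A hA), mul_zero]
    · rw [div_mul_eq_mul_div, eq_div_iff hAi]
      linear_combination (row_mul_row_comm L hskew hsupp hA hB hi hj)
  · push Not at hex
    have hzero : ∀ C ∈ L, C = 0 := fun C hC => by
      refine (eq_smul_of_row_eq_smul (D := 0) (hskew C hC) (by simp) (hsupp C hC) (by simp) 0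
        fun j => ?_).trans (zero_smul K _)
      by_cases hj : j = o
      · rw [hj, diag_eq_zero_of_transpose_eq_neg (hskew C hC), zero_mul]
      · rw [hex C hC j hj, zero_mul]
    exact finrank_le_one 0 fun ⟨C, hC⟩ => ⟨0, by simp [Subtype.ext_iff, hzero C hC]⟩

end LieSubalgebra

theorem statement10_general (N : ℕ)
    (L : LieSubalgebra ℝ (Matrix (Fin N) (Fin N) ℝ))
    (hskew : ∀ C ∈ L, Cᵀ = -C)
    (hrow : ∀ C ∈ L, ∀ i j : Fin N, i.val ≠ 0 → j.val ≠ 0 → C i j = 0) :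
    Module.finrank ℝ L ≤ 1 := by
  cases N with
  | zero => exact (Module.finrank_zero_of_subsingleton (R := ℝ) (M := L)).trans_le zero_le_one
  | succ n =>
    exact L.finrank_le_one_of_skew_of_supported 0 hskew fun C hC i j hi hj =>
      hrow C hC i j (Fin.val_ne_iff.mpr hi) (Fin.val_ne_iff.mpr hj)

theorem statement10 (N : ℕ) (hN : 3 ≤ N)
    (L : LieSubalgebra ℝ (Matrix (Fin N) (Fin N) ℝ))
    (hskew : ∀ C ∈ L, Cᵀ = -C)
    (hrow : ∀ C ∈ L, ∀ i j : Fin N, i.val ≠ 0 → j.val ≠ 0 → C i j = 0) :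
    Module.finrank ℝ L ≤ 1 :=
  statement10_general N L hskew hrow
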